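/- Let F : F_{2^n} → F_{2^n} and x_0 ∈ F_{2^n}. Then F is x_0-APN if and only if Σ_{a,b ∈ F_{2^n}} W_F(a,b)^3 · (−1)^{Tr(a·x_0 + b·F(x_0))} = 2^{2n+1}·(3·2^{n−1} − 1). -/

import Mathlib

open scoped Classical

noncomputable instance (n : ℕ) : Fintype (GaloisField 2 n) := Fintype.ofFinite _

/-- The absolute trace of `F_{2^n}` over `F_2`. -/
noncomputable def fieldTr (n : ℕ) (x : GaloisField 2 n) : ZMod 2 :=
  Algebra.trace (ZMod 2) (GaloisField 2 n) x

/-- `(-1)^{Tr(x)}` as an integer. -/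
noncomputable def chi (n : ℕ) (x : GaloisField 2 n) : ℤ :=
  (-1) ^ (fieldTr n x).val

/-- The Walsh transform `W_F(a,b)`. -/
noncomputable def walsh (n : ℕ) (F : GaloisField 2 n → GaloisField 2 n)
    (a b : GaloisField 2 n) : ℤ :=
  ∑ x : GaloisField 2 n, chi n (b * F x + a * x)

/-- `F` is almost perfect nonlinear. -/
def IsAPN (n : ℕ) (F : GaloisField 2 n → GaloisField 2 n) : Prop :=
  ∀ a b : GaloisField 2 n, a ≠ 0 →
    Nat.card {x : GaloisField 2 n // F (x + a) + F x = b} ≤ 2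

/-- `F` is partially APN at the point `x₀`. -/
def IsPAPN (n : ℕ) (F : GaloisField 2 n → GaloisField 2 n) (x₀ : GaloisField 2 n) : Prop :=
  ∀ u v : GaloisField 2 n, F x₀ + F u + F v + F (x₀ + u + v) = 0 →
    (x₀ + u) * (x₀ + v) * (u + v) = 0

/-- The `(x₀, ε)`-modification of `F`. -/
noncomputable
def pointModify (n : ℕ) (F : GaloisField 2 n → GaloisField 2 n) (x₀ ε : GaloisField 2 n) :
    GaloisField 2 n → GaloisField 2 n :=
  fun x => if x = x₀ then F x₀ + ε else F x

/-- `E_F(a,b) = (-1)^{Tr(a x₀ + b y₀)} (1 - (-1)^{Tr(b ε)})`. -/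
noncomputable def EF (n : ℕ) (F : GaloisField 2 n → GaloisField 2 n)
    (x₀ ε a b : GaloisField 2 n) : ℤ :=
  chi n (a * x₀ + b * F x₀) * (1 - chi n (b * ε))

/-!
Expanding the cube and summing the characters over `(a, b)` gives `2^{2n}` times the number of
pairs `(u, v)` with `F x₀ + F u + F v + F (x₀ + u + v) = 0`: orthogonality forces the fourth
point of each quadruple to be `x₀ + u + v`. The pairs for which `x₀, u, v` are not distinct
always solve this equation and there are `3 · 2^n - 2` of them, so the count equals
`3 · 2^n - 2` exactly when `F` is `x₀`-APN.
-/

open Finset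

section TrivialPairs

variable {K : Type*} [Ring K] [Fintype K]

noncomputable def fourPointSolutions (F : K → K) (x₀ : K) : Finset (K × K) :=
  {p | F x₀ + F p.1 + F p.2 + F (x₀ + p.1 + p.2) = 0}

noncomputable def trivialPairs (x₀ : K) : Finset (K × K) :=
  {p | (x₀ + p.1) * (x₀ + p.2) * (p.1 + p.2) = 0}

variable [NoZeroDivisors K] [CharP K 2]

lemma mem_trivialPairs {x₀ : K} {p : K × K} :
    p ∈ trivialPairs x₀ ↔ p.1 = x₀ ∨ p.2 = x₀ ∨ p.2 = p.1 := by
  simp only [trivialPairs, mem_filter_univ, mul_eq_zero, CharTwo.add_eq_zero, or_assoc, eq_comm]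

lemma trivialPairs_subset_fourPointSolutions (F : K → K) (x₀ : K) :
    trivialPairs x₀ ⊆ fourPointSolutions F x₀ := by
  rintro ⟨x, y⟩ h
  simp only [fourPointSolutions, mem_filter_univ]
  obtain rfl | rfl | rfl : x = x₀ ∨ y = x₀ ∨ y = x := mem_trivialPairs.1 h
  all_goals
    simp [CharTwo.add_self_eq_zero, add_assoc, add_left_comm]

lemma card_trivialPairs (x₀ : K) : (#(trivialPairs x₀) : ℤ) = 3 * Fintype.card K - 2 := by
  have hrow (x : K) : (∑ y : K, if x = x₀ ∨ y = x₀ ∨ y = x then 1 else 0 : ℤ) =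
      if x = x₀ then (Fintype.card K : ℤ) else 2 := by
    split_ifs with hx
    · simp [hx]
    · have hpair : ({y | y = x₀ ∨ y = x} : Finset K) = {x₀, x} := by ext; simp
      simp [hx, hpair, card_pair (Ne.symm hx)]
  have htriv :
      trivialPairs x₀ = ({p | p.1 = x₀ ∨ p.2 = x₀ ∨ p.2 = p.1} : Finset (K × K)) := by
    ext p
    simp [mem_trivialPairs]
  rw [htriv, card_filter, Nat.cast_sum, Fintype.sum_prod_type]
  simp only [Nat.cast_ite, Nat.cast_one, Nat.cast_zero, hrow]
  rw [Fintype.sum_eq_add_sum_compl x₀, if_pos rfl,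
    sum_congr rfl fun x hx => if_neg (by simpa using hx), sum_const, card_compl, card_singleton,
    nsmul_eq_mul, Nat.cast_sub Fintype.card_pos]
  ring

end TrivialPairs

lemma isPAPN_iff_card {n : ℕ} (F : GaloisField 2 n → GaloisField 2 n) (x₀ : GaloisField 2 n) :
    IsPAPN n F x₀ ↔ #(fourPointSolutions F x₀) = #(trivialPairs x₀) := by
  have hsub := trivialPairs_subset_fourPointSolutions F x₀
  have hpapn : IsPAPN n F x₀ ↔ fourPointSolutions F x₀ ⊆ trivialPairs x₀ := by
    simp [IsPAPN, subset_iff, fourPointSolutions, trivialPairs]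
  rw [hpapn]
  exact ⟨fun h => by rw [h.antisymm hsub],
    fun h => (eq_of_subset_of_card_le hsub h.le).superset⟩

section AddChar

variable {R R' : Type*} [CommRing R] [Fintype R] [CommRing R'] {ψ : AddChar R R'}

lemma walsh_cube_mul_addChar (F : R → R) (x₀ a b : R) :
    (∑ x, ψ (b * F x + a * x)) ^ 3 * ψ (a * x₀ + b * F x₀) =
      ∑ x, ∑ y, ∑ z, ψ (a * (x₀ + x + y + z) + b * (F x₀ + F x + F y + F z)) := by
  simp only [pow_three, sum_mul, mul_sum]
  refine sum_congr rfl fun x _ => sum_congr rfl fun y _ => sum_congr rfl fun z _ => ?_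
  simp only [← AddChar.map_add_eq_mul]
  congr 1
  ring

variable [IsDomain R']

lemma sum_sum_addChar (hψ : ψ.IsPrimitive) (u v : R) :
    ∑ a, ∑ b, ψ (a * u + b * v) =
      if u = 0 ∧ v = 0 then (Fintype.card R : R') ^ 2 else 0 := by
  simp_rw [AddChar.map_add_eq_mul, ← sum_mul_sum, AddChar.sum_mulShift _ hψ]
  split_ifs <;> simp_all [sq]

lemma sum_sum_walsh_cube_mul_addChar [CharP R 2] (hψ : ψ.IsPrimitive) (F : R → R) (x₀ : R) :
    ∑ a, ∑ b, (∑ x, ψ (b * F x + a * x)) ^ 3 * ψ (a * x₀ + b * F x₀) =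
      (Fintype.card R : R') ^ 2 * #(fourPointSolutions F x₀) := by
  have hswap : ∀ g : R → R → R → R → R → R',
      ∑ a, ∑ b, ∑ x, ∑ y, ∑ z, g a b x y z =
        ∑ x, ∑ y, ∑ z, ∑ a, ∑ b, g a b x y z := by
    intro g
    rw [sum_comm_cycle]
    refine sum_congr rfl fun x _ => ?_
    rw [sum_comm_cycle]
    refine sum_congr rfl fun y _ => ?_
    rw [sum_comm_cycle]
  simp_rw [walsh_cube_mul_addChar]
  rw [hswap]
  simp_rw [sum_sum_addChar hψ, ite_and, CharTwo.add_eq_zero, sum_ite_eq, mem_univ, if_true]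
  rw [fourPointSolutions, card_filter, Nat.cast_sum, mul_sum, Fintype.sum_prod_type]
  simp only [CharTwo.add_eq_zero, Nat.cast_ite, Nat.cast_one, Nat.cast_zero, mul_ite, mul_one,
    mul_zero]

end AddChar

section TraceChar

variable (n : ℕ)

noncomputable def traceChar : AddChar (GaloisField 2 n) ℤ :=
  (AddChar.zmodChar 2 (by norm_num : (-1 : ℤ) ^ 2 = 1)).compAddMonoidHom
    (Algebra.trace (ZMod 2) (GaloisField 2 n)).toAddMonoidHom

lemma traceChar_apply (x : GaloisField 2 n) : traceChar n x = chi n x := rfl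

lemma traceChar_isPrimitive : (traceChar n).IsPrimitive := by
  refine AddChar.IsPrimitive.of_ne_one fun h => ?_
  obtain ⟨x, hx⟩ := Algebra.trace_surjective (ZMod 2) (GaloisField 2 n) 1
  have hx' : traceChar n x = -1 := by
    rw [traceChar_apply, chi, fieldTr, hx]
    rfl
  rw [h, AddChar.one_apply] at hx'
  exact absurd hx' (by norm_num)

end TraceChar

theorem papn_iff_third_moment (n : ℕ) (hn : 0 < n) (F : GaloisField 2 n → GaloisField 2 n) (x₀ : GaloisField 2 n) :
    IsPAPN n F x₀ ↔
      ∑ a : GaloisField 2 n, ∑ b : GaloisField 2 n,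
          walsh n F a b ^ 3 * chi n (a * x₀ + b * F x₀) =
        2 ^ (2 * n + 1) * (3 * 2 ^ (n - 1) - 1) := by
  have hq : (Fintype.card (GaloisField 2 n) : ℤ) = 2 ^ n := by
    rw [← Nat.card_eq_fintype_card, GaloisField.card 2 n hn.ne']
    push_cast
    rfl
  have hrhs : (2 : ℤ) ^ (2 * n + 1) * (3 * 2 ^ (n - 1) - 1) = (2 ^ n) ^ 2 * (3 * 2 ^ n - 2) := by
    obtain ⟨m, rfl⟩ := Nat.exists_eq_add_of_lt hn
    simp only [zero_add, Nat.add_sub_cancel]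
    ring
  -- `chi n` is `traceChar n` definitionally,
  -- so `walsh n F a b = ∑ x, traceChar n (b * F x + a * x)`
  have hmoment : ∑ a, ∑ b, walsh n F a b ^ 3 * chi n (a * x₀ + b * F x₀) =
      (Fintype.card (GaloisField 2 n) : ℤ) ^ 2 * #(fourPointSolutions F x₀) :=
    sum_sum_walsh_cube_mul_addChar (traceChar_isPrimitive n) F x₀
  rw [hmoment, hrhs, ← hq, ← card_trivialPairs, mul_right_inj' (by positivity), Nat.cast_inj,
    isPAPN_iff_card]
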